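/- Monotonicity of the payoff in protection levels: the attacker's payoff U^a(a,d) is non-increasing in each defender coordinate d_k, provided the losses are monotone with respect to the partial order on sparsity patterns (Δ_s ≥ Δ_{s'} whenever s ≤ s' coordinatewise, i.e., more disabled nodes give larger loss). -/

import Mathlib

def patProb (n : ℕ) (a d : Fin n → ℝ) (s : Fin n → Bool) : ℝ :=
  ∏ k, if s k then 1 - a k * (1 - d k) else a k * (1 - d k)

def payoff (n : ℕ) (Δ : (Fin n → Bool) → ℝ) (a d : Fin n → ℝ) : ℝ :=
  ∑ s : Fin n → Bool, patProb n a d s * Δ s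

/-!
The payoff is the expectation of `Δ` under a product of independent Bernoulli coordinates,
coordinate `k` being `false` with probability `P_k = a_k (1 - d_k)`; raising `d` lowers every
`P_k`. Conditioning on the first coordinate, the expectation is `P₀ X + (1 - P₀) Y`, where `X` and
`Y` are the expectations of the two restrictions of `Δ` to the remaining coordinates. By induction
`X` and `Y` only decrease when the remaining `P_k` decrease, and since `Δ` is antitone, `X ≥ Y`,
so the expectation also decreases when `P₀` does.
-/

section Bernoulli

variable {n : ℕ}

/-- `p k` is the probability that coordinate `k` is `false`. -/
def bernoulliWeight (p : Fin n → ℝ) (s : Fin n → Bool) : ℝ :=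
  ∏ k, if s k then 1 - p k else p k

def bernoulliExpect (p : Fin n → ℝ) (f : (Fin n → Bool) → ℝ) : ℝ :=
  ∑ s, bernoulliWeight p s * f s

theorem bernoulliWeight_nonneg {p : Fin n → ℝ} (hp0 : ∀ k, 0 ≤ p k) (hp1 : ∀ k, p k ≤ 1)
    (s : Fin n → Bool) : 0 ≤ bernoulliWeight p s :=
  Finset.prod_nonneg fun k _ => by
    split_ifs
    · exact sub_nonneg.mpr (hp1 k)
    · exact hp0 k

theorem bernoulliExpect_mono {p : Fin n → ℝ} (hp0 : ∀ k, 0 ≤ p k) (hp1 : ∀ k, p k ≤ 1)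
    {f g : (Fin n → Bool) → ℝ} (hfg : f ≤ g) : bernoulliExpect p f ≤ bernoulliExpect p g :=
  Finset.sum_le_sum fun s _ =>
    mul_le_mul_of_nonneg_left (hfg s) (bernoulliWeight_nonneg hp0 hp1 s)

theorem bernoulliWeight_cons (p : Fin (n + 1) → ℝ) (b : Bool) (t : Fin n → Bool) :
    bernoulliWeight p (Fin.cons b t) =
      (if b then 1 - p 0 else p 0) * bernoulliWeight (Fin.tail p) t := by
  simp only [bernoulliWeight, Fin.prod_univ_succ, Fin.cons_zero, Fin.cons_succ, Fin.tail]

theorem bernoulliExpect_succ (p : Fin (n + 1) → ℝ) (f : (Fin (n + 1) → Bool) → ℝ) :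
    bernoulliExpect p f =
      p 0 * bernoulliExpect (Fin.tail p) (fun t => f (Fin.cons false t)) +
        (1 - p 0) * bernoulliExpect (Fin.tail p) (fun t => f (Fin.cons true t)) := by
  rw [bernoulliExpect, ← (Fin.consEquiv fun _ => Bool).sum_comp, Fintype.sum_prod_type,
    Fintype.sum_bool, add_comm]
  simp only [Fin.consEquiv, Equiv.coe_fn_mk, bernoulliWeight_cons, bernoulliExpect,
    Finset.mul_sum, mul_assoc, Bool.false_eq_true, if_true, if_false]

theorem bernoulliExpect_le_of_antitone {p q : Fin n → ℝ} (hq0 : ∀ k, 0 ≤ q k)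
    (hqp : ∀ k, q k ≤ p k) (hp1 : ∀ k, p k ≤ 1) {f : (Fin n → Bool) → ℝ} (hf : Antitone f) :
    bernoulliExpect q f ≤ bernoulliExpect p f := by
  induction n with
  | zero => simp [bernoulliExpect, bernoulliWeight]
  | succ n ih =>
    have hp0 k : 0 ≤ p k := (hq0 k).trans (hqp k)
    have hq1 k : q k ≤ 1 := (hqp k).trans (hp1 k)
    have h_tail (b : Bool) :
        bernoulliExpect (Fin.tail q) (fun t => f (Fin.cons b t)) ≤
          bernoulliExpect (Fin.tail p) (fun t => f (Fin.cons b t)) :=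
      ih (fun k => hq0 k.succ) (fun k => hqp k.succ) (fun k => hp1 k.succ)
        fun _ _ hst => hf (Fin.cons_le_cons.2 ⟨le_rfl, hst⟩)
    have h_flip : bernoulliExpect (Fin.tail p) (fun t => f (Fin.cons true t)) ≤
        bernoulliExpect (Fin.tail p) (fun t => f (Fin.cons false t)) :=
      bernoulliExpect_mono (fun k => hp0 k.succ) (fun k => hp1 k.succ)
        fun t => hf (Fin.cons_le_cons.2 ⟨Bool.false_le true, le_rfl⟩)
    rw [bernoulliExpect_succ q, bernoulliExpect_succ p]
    calc _ ≤ q 0 * bernoulliExpect (Fin.tail p) (fun t => f (Fin.cons false t)) +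
          (1 - q 0) * bernoulliExpect (Fin.tail p) (fun t => f (Fin.cons true t)) :=
          add_le_add (mul_le_mul_of_nonneg_left (h_tail false) (hq0 0))
            (mul_le_mul_of_nonneg_left (h_tail true) (sub_nonneg.2 (hq1 0)))
      _ ≤ _ := by nlinarith [mul_nonneg (sub_nonneg.2 (hqp 0)) (sub_nonneg.2 h_flip)]

end Bernoulli

theorem payoff_eq_bernoulliExpect (n : ℕ) (Δ : (Fin n → Bool) → ℝ) (a d : Fin n → ℝ) :
    payoff n Δ a d = bernoulliExpect (fun k => a k * (1 - d k)) Δ :=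
  rfl

theorem stmt_16_general (n : ℕ) (a d d' : Fin n → ℝ)
    (ha : ∀ k, a k ∈ Set.Icc (0:ℝ) 1) (hd : ∀ k, d k ∈ Set.Icc (0:ℝ) 1)
    (hd' : ∀ k, d' k ∈ Set.Icc (0:ℝ) 1) (hle : ∀ k, d k ≤ d' k)
    (Δ : (Fin n → Bool) → ℝ)
    (hanti : ∀ s s' : Fin n → Bool, (∀ k, s k ≤ s' k) → Δ s' ≤ Δ s) :
    payoff n Δ a d' ≤ payoff n Δ a d := by
  rw [payoff_eq_bernoulliExpect, payoff_eq_bernoulliExpect]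
  refine bernoulliExpect_le_of_antitone (fun k => ?_) (fun k => ?_) (fun k => ?_)
    fun s s' hss' => hanti s s' hss'
  · exact mul_nonneg (ha k).1 (sub_nonneg.2 (hd' k).2)
  · exact mul_le_mul_of_nonneg_left (by linarith [hle k]) (ha k).1
  · nlinarith [(ha k).2, mul_nonneg (ha k).1 (hd k).1]

theorem stmt_16 (n : ℕ) (a d d' : Fin n → ℝ)
    (ha : ∀ k, a k ∈ Set.Icc (0:ℝ) 1) (hd : ∀ k, d k ∈ Set.Icc (0:ℝ) 1)
    (hd' : ∀ k, d' k ∈ Set.Icc (0:ℝ) 1) (hle : ∀ k, d k ≤ d' k)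
    (Δ : (Fin n → Bool) → ℝ) (hΔ0 : ∀ s, 0 ≤ Δ s)
    (hanti : ∀ s s' : Fin n → Bool, (∀ k, s k ≤ s' k) → Δ s' ≤ Δ s) :
    payoff n Δ a d' ≤ payoff n Δ a d :=
  stmt_16_general n a d d' ha hd hd' hle Δ hanti
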